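/- Let n ≥ 1, θ > 0 and τ > 1/2, and let ν be the measure on ℝⁿ with density e^{−(1+θ|y|²)^τ} with respect to Lebesgue measure. There exist constants c > 0 and c₃ > 0 such that for every x ∈ ℝⁿ with |x| ≥ 1 and every r ∈ (0,1], ν(B(x,r)) ≥ c rⁿ exp( −(1 + θ|x|²)^τ + c₃ r |x|^{2τ−1} ). -/

import Mathlib

/-!
Push the ball `B(x, r)` a distance `3r/4` towards the origin and shrink it to radius `r/4`: the
smaller ball `B(z, r/4)` still lies in `B(x, r)`, and all its points have norm at most
`|x| - r/2`. As the density is radially decreasing, `ν(B(x, r))` is at least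
`|B(z, r/4)| e^{-φ(|x| - r/2)}` with `φ(s) = (1 + θs²)^τ`, and by the mean value theorem
`φ(|x|) - φ(|x| - r/2) ≥ c₃ r |x|^{2τ-1}`, since on `[|x|/2, |x|]` the derivative
`2θτ s (1 + θs²)^{τ-1}` is comparable to `|x|^{2τ-1}`.
-/

open MeasureTheory Metric Set

lemma min_rpow_mul_rpow_le_rpow {a b u v : ℝ} (p : ℝ) (ha : 0 < a) (hv : 0 < v)
    (hau : a * v ≤ u) (hub : u ≤ b * v) : min (a ^ p) (b ^ p) * v ^ p ≤ u ^ p := by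
  have hu : 0 < u := (mul_pos ha hv).trans_le hau
  rcases le_total 0 p with hp | hp
  · calc min (a ^ p) (b ^ p) * v ^ p ≤ a ^ p * v ^ p := by gcongr; exact min_le_left _ _
      _ = (a * v) ^ p := (Real.mul_rpow ha.le hv.le).symm
      _ ≤ u ^ p := by gcongr
  · have hb : 0 < b := pos_of_mul_pos_left (hu.trans_le hub) hv.le
    calc min (a ^ p) (b ^ p) * v ^ p ≤ b ^ p * v ^ p := by gcongr; exact min_le_right _ _
      _ = (b * v) ^ p := (Real.mul_rpow hb.le hv.le).symm
      _ ≤ u ^ p := Real.rpow_le_rpow_of_nonpos hu hub hp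

lemma le_deriv_one_add_mul_sq_rpow {θ τ M ξ : ℝ} (hθ : 0 < θ) (hτ : 0 < τ) (hM : 1 ≤ M)
    (hξ : ξ ∈ Icc (M / 2) M) :
    θ * τ * min ((θ / 4) ^ (τ - 1)) ((1 + θ) ^ (τ - 1)) * M ^ (2 * τ - 1)
      ≤ θ * (2 * ξ) * τ * (1 + θ * ξ ^ 2) ^ (τ - 1) := by
  obtain ⟨hξM, hξM'⟩ := hξ
  have hM0 : 0 < M := by linarith
  have hξ0 : 0 < ξ := by linarith
  have hlow : (M / 2) ^ 2 ≤ ξ ^ 2 := by gcongr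
  have hupp : ξ ^ 2 ≤ M ^ 2 := by gcongr
  have hbase : min ((θ / 4) ^ (τ - 1)) ((1 + θ) ^ (τ - 1)) * (M ^ 2) ^ (τ - 1)
      ≤ (1 + θ * ξ ^ 2) ^ (τ - 1) :=
    min_rpow_mul_rpow_le_rpow _ (by positivity) (by positivity)
      (by nlinarith [mul_le_mul_of_nonneg_left hlow hθ.le])
      (by nlinarith [mul_le_mul_of_nonneg_left hupp hθ.le])
  have hsplit : M ^ (2 * τ - 1) = M * (M ^ 2) ^ (τ - 1) := by
    rw [show 2 * τ - 1 = 1 + 2 * (τ - 1) by ring, Real.rpow_add hM0, Real.rpow_one,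
      Real.rpow_mul hM0.le, Real.rpow_two]
  rw [hsplit]
  calc θ * τ * min ((θ / 4) ^ (τ - 1)) ((1 + θ) ^ (τ - 1)) * (M * (M ^ 2) ^ (τ - 1))
      = θ * τ * M * (min ((θ / 4) ^ (τ - 1)) ((1 + θ) ^ (τ - 1)) * (M ^ 2) ^ (τ - 1)) := by ring
    _ ≤ θ * τ * (2 * ξ) * (1 + θ * ξ ^ 2) ^ (τ - 1) := by gcongr θ * τ * ?_ * ?_; linarith
    _ = θ * (2 * ξ) * τ * (1 + θ * ξ ^ 2) ^ (τ - 1) := by ring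

lemma hasDerivAt_one_add_mul_sq_rpow {θ : ℝ} (τ s : ℝ) (hθ : 0 ≤ θ) :
    HasDerivAt (fun s => (1 + θ * s ^ 2) ^ τ)
      (θ * (2 * s) * τ * (1 + θ * s ^ 2) ^ (τ - 1)) s := by
  have h : HasDerivAt (fun s : ℝ => 1 + θ * s ^ 2) (θ * (2 * s)) s := by
    simpa using ((hasDerivAt_pow 2 s).const_mul θ).const_add 1
  exact h.rpow_const (Or.inl (by positivity))

lemma exists_one_add_mul_sq_rpow_add_le {θ τ : ℝ} (hθ : 0 < θ) (hτ : 0 < τ) :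
    ∃ c > 0, ∀ M : ℝ, 1 ≤ M → ∀ r : ℝ, 0 ≤ r → r ≤ M →
      (1 + θ * (M - r / 2) ^ 2) ^ τ + c * r * M ^ (2 * τ - 1) ≤ (1 + θ * M ^ 2) ^ τ := by
  set K := min ((θ / 4) ^ (τ - 1)) ((1 + θ) ^ (τ - 1))
  have hK : 0 < K := lt_min (by positivity) (by positivity)
  refine ⟨θ * τ * K / 2, by positivity, fun M hM r hr hrM => ?_⟩
  have hf := fun s => hasDerivAt_one_add_mul_sq_rpow τ s hθ.le
  have hgrowth := (convex_Icc (M / 2) M).mul_sub_le_image_sub_of_le_deriv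
    (fun s _ => (hf s).continuousAt.continuousWithinAt)
    (fun s _ => (hf s).differentiableAt.differentiableWithinAt)
    (fun s hs => (hf s).deriv ▸ le_deriv_one_add_mul_sq_rpow hθ hτ hM (interior_subset hs))
    (M - r / 2) ⟨by linarith, by linarith⟩ M ⟨by linarith, le_rfl⟩ (by linarith)
  linarith

lemma antitoneOn_exp_neg_one_add_mul_sq_rpow {θ τ : ℝ} (hθ : 0 ≤ θ) (hτ : 0 ≤ τ) :
    AntitoneOn (fun s : ℝ => Real.exp (-(1 + θ * s ^ 2) ^ τ)) (Ici 0) :=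
  fun a (ha : 0 ≤ a) b _ hab => by
    dsimp only
    gcongr

section Balls

variable {E : Type*} [NormedAddCommGroup E] [NormedSpace ℝ E]

lemma exists_ball_subset_ball_forall_norm_le {x : E} {r : ℝ} (hr : 0 < r) (hrx : r ≤ ‖x‖) :
    ∃ z, ball z (r / 4) ⊆ ball x r ∧ ∀ y ∈ ball z (r / 4), ‖y‖ ≤ ‖x‖ - r / 2 := by
  have hx : 0 < ‖x‖ := hr.trans_le hrx
  set t := 3 * r / (4 * ‖x‖)
  have ht : t * ‖x‖ = 3 * r / 4 := by simp only [t]; field_simp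
  have ht1 : t ≤ 1 := by rw [div_le_one (by positivity)]; linarith
  refine ⟨(1 - t) • x, ball_subset_ball' ?_, fun y hy => ?_⟩
  · have : dist ((1 - t) • x) x = 3 * r / 4 := by
      rw [dist_eq_norm, show (1 - t) • x - x = -(t • x) by module, norm_neg, norm_smul,
        Real.norm_of_nonneg (by positivity), ht]
    linarith
  · have hz : ‖(1 - t) • x‖ = ‖x‖ - 3 * r / 4 := by
      rw [norm_smul, Real.norm_of_nonneg (by linarith)]
      linarith
    have := norm_le_norm_add_norm_sub' y ((1 - t) • x)
    rw [mem_ball_iff_norm] at hy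
    linarith

variable [MeasurableSpace E] [BorelSpace E]

lemma ofReal_mul_measure_ball_le_withDensity_ball (μ : Measure E) [μ.IsAddHaarMeasure]
    {g : ℝ → ℝ} (hg : Measurable g) (hg_anti : AntitoneOn g (Ici 0)) {x : E} {r : ℝ}
    (hr : 0 < r) (hrx : r ≤ ‖x‖) :
    ENNReal.ofReal (g (‖x‖ - r / 2)) * μ (ball x (r / 4))
      ≤ μ.withDensity (fun y => ENNReal.ofReal (g ‖y‖)) (ball x r) := by
  obtain ⟨z, hsub, hnorm⟩ := exists_ball_subset_ball_forall_norm_le hr hrx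
  calc ENNReal.ofReal (g (‖x‖ - r / 2)) * μ (ball x (r / 4))
      = ∫⁻ _ in ball z (r / 4), ENNReal.ofReal (g (‖x‖ - r / 2)) ∂μ := by
        rw [setLIntegral_const, μ.addHaar_ball_center z, μ.addHaar_ball_center x, mul_comm]
    _ ≤ ∫⁻ y in ball z (r / 4), ENNReal.ofReal (g ‖y‖) ∂μ :=
        setLIntegral_mono (hg.comp measurable_norm).ennreal_ofReal fun y hy =>
          ENNReal.ofReal_le_ofReal <|
            hg_anti (norm_nonneg y) (by simp only [mem_Ici]; linarith) (hnorm y hy)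
    _ ≤ ∫⁻ y in ball x r, ENNReal.ofReal (g ‖y‖) ∂μ := lintegral_mono_set hsub
    _ = μ.withDensity (fun y => ENNReal.ofReal (g ‖y‖)) (ball x r) :=
        (withDensity_apply _ measurableSet_ball).symm

theorem exists_ofReal_le_withDensity_ball [FiniteDimensional ℝ E] (μ : Measure E)
    [μ.IsAddHaarMeasure] {θ τ : ℝ} (hθ : 0 < θ) (hτ : 0 < τ) :
    ∃ c > (0 : ℝ), ∃ c₃ > (0 : ℝ), ∀ x : E, 1 ≤ ‖x‖ → ∀ r ∈ Ioc (0 : ℝ) 1,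
      ENNReal.ofReal (c * r ^ Module.finrank ℝ E *
          Real.exp (-(1 + θ * ‖x‖ ^ 2) ^ τ + c₃ * r * ‖x‖ ^ (2 * τ - 1)))
        ≤ μ.withDensity (fun y => ENNReal.ofReal (Real.exp (-(1 + θ * ‖y‖ ^ 2) ^ τ)))
          (ball x r) := by
  obtain ⟨c₃, hc₃, hgap⟩ := exists_one_add_mul_sq_rpow_add_le hθ hτ
  set d := Module.finrank ℝ E
  set V := μ.real (ball 0 1)
  have hV : 0 < V := ENNReal.toReal_pos (measure_ball_pos μ 0 one_pos).ne' measure_ball_lt_top.ne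
  refine ⟨V / 4 ^ d, by positivity, c₃, hc₃, fun x hx r ⟨hr, hr1⟩ => ?_⟩
  refine le_trans ?_ (ofReal_mul_measure_ball_le_withDensity_ball μ (by fun_prop)
    (antitoneOn_exp_neg_one_add_mul_sq_rpow hθ.le hτ.le) hr (hr1.trans hx))
  rw [μ.addHaar_ball_of_pos _ (by positivity), ← ofReal_measureReal,
    ← ENNReal.ofReal_mul (by positivity), ← ENNReal.ofReal_mul (by positivity)]
  refine ENNReal.ofReal_le_ofReal ?_
  calc V / 4 ^ d * r ^ d * Real.exp (-(1 + θ * ‖x‖ ^ 2) ^ τ + c₃ * r * ‖x‖ ^ (2 * τ - 1))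
      = (r / 4) ^ d * V * Real.exp (-(1 + θ * ‖x‖ ^ 2) ^ τ + c₃ * r * ‖x‖ ^ (2 * τ - 1)) := by
        rw [div_pow]; ring
    _ ≤ (r / 4) ^ d * V * Real.exp (-(1 + θ * (‖x‖ - r / 2) ^ 2) ^ τ) := by
        gcongr
        linarith [hgap ‖x‖ hx r hr.le (hr1.trans hx)]
    _ = Real.exp (-(1 + θ * (‖x‖ - r / 2) ^ 2) ^ τ) * ((r / 4) ^ d * V) := by ring

end Balls

theorem stmt_5_general (n : ℕ) (θ τ : ℝ) (hθ : 0 < θ) (hτ : 1 / 2 < τ) :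
    ∃ c > (0 : ℝ), ∃ c₃ > (0 : ℝ), ∀ x : EuclideanSpace ℝ (Fin n), 1 ≤ ‖x‖ →
      ∀ r ∈ Set.Ioc (0 : ℝ) 1,
        ENNReal.ofReal
            (c * r ^ n *
              Real.exp (-(1 + θ * ‖x‖ ^ 2) ^ τ + c₃ * r * ‖x‖ ^ (2 * τ - 1)))
          ≤ (volume.withDensity
              (fun y => ENNReal.ofReal (Real.exp (-(1 + θ * ‖y‖ ^ 2) ^ τ))))
              (Metric.ball x r) := by
  simpa only [finrank_euclideanSpace_fin] using
    exists_ofReal_le_withDensity_ball (volume : Measure (EuclideanSpace ℝ (Fin n))) hθ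
      (by linarith : 0 < τ)

/-- lower bound for the mass of balls under the measure with density
`e^{-(1+θ|y|²)^τ}` with respect to Lebesgue measure on `ℝⁿ`. -/
theorem stmt_5 (n : ℕ) (hn : 1 ≤ n) (θ τ : ℝ) (hθ : 0 < θ) (hτ : 1 / 2 < τ) :
    ∃ c > (0 : ℝ), ∃ c₃ > (0 : ℝ), ∀ x : EuclideanSpace ℝ (Fin n), 1 ≤ ‖x‖ →
      ∀ r ∈ Set.Ioc (0 : ℝ) 1,
        ENNReal.ofReal
            (c * r ^ n *
              Real.exp (-(1 + θ * ‖x‖ ^ 2) ^ τ + c₃ * r * ‖x‖ ^ (2 * τ - 1)))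
          ≤ (volume.withDensity
              (fun y => ENNReal.ofReal (Real.exp (-(1 + θ * ‖y‖ ^ 2) ^ τ))))
              (Metric.ball x r) :=
  stmt_5_general n θ τ hθ hτ
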